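/- Let T₀ > 0, 0 < μ₁ < μ₂, ω a modulus of continuity, θ : (0,T₀) → (0,∞) continuous and nonincreasing, and let c* ∈ D(T₀,μ₁,μ₂,ω,θ;T₁,γ,η) for admissible parameters T₁, γ, η. Set ν₂ := (1/2)·min{1, √μ₁/π}. Let λ > 0 satisfy ν₂·ω(1/λ) ≤ 8γ³ and (ν₂/(2γ))·ω(1/λ) ≤ min{γ² − μ₁, μ₂ − γ²}. Let 0 < a < b < T₁ be such that a·γ·λ/(2π) and b·γ·λ/(2π) are natural numbers (so that k := γ·λ·(b−a)/(2π) is a natural number), ω(b) ≤ η·ω(T₁ − b), and λ·ω(1/λ) ≥ θ(a). For i = 0,1,…,k set t_i := a + (2π/(γλ))·i and, for i ≥ 1, ε_i := ν₂·θ(t_i). Define c_λ(t) := c*(t) for t ∈ [0,a] ∪ [b,T₀] and c_λ(t) := γ² − φ_{ε_i,γ,λ}(t) for t ∈ [t_{i−1}, t_i], i = 1,…,k. Then c_λ belongs to PS(T₀,μ₁,μ₂,ω,θ) and |c_λ(t) − c*(t)| ≤ (ν₂/(2γ))·ω(1/λ) for every t ∈ [0,T₀]. -/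

import Mathlib

/-!
On the `i`-th cell `[tᵢ₋₁, tᵢ]` the coefficient is `γ² − φ_{εᵢ,γ,λ}`, where `|φ'| ≤ εᵢ` and
`|φ| ≤ εᵢ / (2γλ)` as long as `εᵢ ≤ 8γ³λ`; moreover `εᵢ = ν₂ θ(tᵢ) ≤ ν₂ λ ω(1/λ)` because `θ` is
nonincreasing and `θ(a) ≤ λ ω(1/λ)`. Hence on `[0, b]` the coefficient is `ν₂ λ ω(1/λ)`-Lipschitz
and stays within `ν₂ ω(1/λ) / (2γ)` of `γ²`. Since `σ ↦ σ / ω σ` is nondecreasing, the Lipschitz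
bound gives the modulus `ω` at scales below `1/λ`, and the oscillation bound
`ν₂ ω(1/λ) / γ ≤ ω(1/λ)` gives it at larger scales. Across `b`, where `c_λ = c* = γ²` on
`[b, T₁]`, the slack `η` in the modulus of `c*` absorbs the increment on `[0, b]`, which is at most
`ω(b) ≤ η ω(T₁ − b)`. Off the nodes, `|c_λ'| ≤ εᵢ ≤ θ(tᵢ) ≤ θ(t)`.
-/

open Set Filter MeasureTheory

/-- A modulus of continuity: positive for positive arguments, tends to `0` at `0⁺`,
nondecreasing, and `σ ↦ σ / ω σ` is nondecreasing on `(0, ∞)`. -/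
def IsModulusOfContinuity (ω : ℝ → ℝ) : Prop :=
  (∀ σ : ℝ, 0 < σ → 0 < ω σ) ∧
  Tendsto ω (nhdsWithin 0 (Ioi 0)) (nhds 0) ∧
  (∀ s t : ℝ, 0 ≤ s → s ≤ t → ω s ≤ ω t) ∧
  (∀ s t : ℝ, 0 < s → s ≤ t → s / ω s ≤ t / ω t)

/-- Membership in the class `PS(T₀, μ₁, μ₂, ω, θ)` of propagation speeds. -/
def MemPS (T0 μ1 μ2 : ℝ) (ω θ : ℝ → ℝ) (c : ℝ → ℝ) : Prop :=
  ContinuousOn c (Icc 0 T0) ∧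
  LocallyLipschitzOn (Ioo 0 T0) c ∧
  (∀ t ∈ Ioo 0 T0, μ1 ≤ c t ∧ c t ≤ μ2) ∧
  (∀ t ∈ Icc 0 T0, ∀ s ∈ Icc 0 T0, |c t - c s| ≤ ω |t - s|) ∧
  (∀ᵐ t ∂(volume.restrict (Ioo 0 T0)), |deriv c t| ≤ θ t)

/-- The key quantity `m(λ) = inf { λ ω(1/λ) s + ∫_s^{T₀} θ : s ∈ (0, T₀] }`. -/
noncomputable def mFun (T0 : ℝ) (ω θ : ℝ → ℝ) (lam : ℝ) : ℝ :=
  sInf ((fun s => lam * ω (1 / lam) * s + ∫ t in s..T0, θ t) '' Ioc 0 T0)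

/-- Derivative within the time interval `[0, T₀]`. -/
noncomputable def der (T0 : ℝ) (u : ℝ → ℝ) : ℝ → ℝ :=
  fun t => derivWithin u (Icc 0 T0) t

/-- `u` is a (twice differentiable) solution of `u'' + λ² c(t) u = 0` on `[0, T₀]`. -/
def IsSol (T0 lam : ℝ) (c u : ℝ → ℝ) : Prop :=
  ∀ t ∈ Icc 0 T0,
    HasDerivWithinAt u (der T0 u t) (Icc 0 T0) t ∧
    HasDerivWithinAt (der T0 u) (-(lam ^ 2 * c t * u t)) (Icc 0 T0) t

/-- Membership in the class `D(T₀,μ₁,μ₂,ω,θ; T₁,γ,η)`. -/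
def MemD (T0 μ1 μ2 : ℝ) (ω θ : ℝ → ℝ) (T1 γ η : ℝ) (c : ℝ → ℝ) : Prop :=
  MemPS T0 μ1 μ2 ω θ c ∧
  (∀ t ∈ Icc 0 T1, c t = γ ^ 2) ∧
  (∀ t ∈ Icc 0 T0, ∀ s ∈ Icc 0 T0, |c t - c s| ≤ (1 - η) * ω |t - s|)

/-- The building-block perturbation
`φ_{ε,γ,λ}(t) = (ε/(4γλ)) sin(2γλt) + (ε²/(64γ⁴λ²)) sin⁴(γλt)`. -/
noncomputable def phiF (ε γ lam t : ℝ) : ℝ :=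
  ε / (4 * γ * lam) * Real.sin (2 * γ * lam * t) +
    ε ^ 2 / (64 * γ ^ 4 * lam ^ 2) * (Real.sin (γ * lam * t)) ^ 4

/-- The constant `ν₂ = (1/2) · min{1, √μ₁/π}`. -/
noncomputable def nu2 (μ1 : ℝ) : ℝ := 1 / 2 * min 1 (Real.sqrt μ1 / Real.pi)

/-- The nodes `tᵢ = a + (2π/(γλ)) i` of the `θ`-construction. -/
noncomputable def tNode (a γ lam : ℝ) (i : ℕ) : ℝ := a + 2 * Real.pi / (γ * lam) * i

open Real Topology
open scoped NNReal

lemma hasDerivAt_phiF {γ lam : ℝ} (hγ : 0 < γ) (hlam : 0 < lam) (ε t : ℝ) :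
    HasDerivAt (phiF ε γ lam)
      (ε / 2 * cos (2 * γ * lam * t) +
        ε ^ 2 / (16 * γ ^ 3 * lam) * (sin (γ * lam * t) ^ 3 * cos (γ * lam * t))) t := by
  have hsin2 :
      HasDerivAt (fun x => sin (2 * γ * lam * x)) (cos (2 * γ * lam * t) * (2 * γ * lam)) t :=
    (hasDerivAt_sin _).comp t ((hasDerivAt_id t).const_mul _ |>.congr_deriv (mul_one _))
  have hsin : HasDerivAt (fun x => sin (γ * lam * x)) (cos (γ * lam * t) * (γ * lam)) t :=
    (hasDerivAt_sin _).comp t ((hasDerivAt_id t).const_mul _ |>.congr_deriv (mul_one _))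
  refine ((hsin2.const_mul (ε / (4 * γ * lam))).add
    ((hsin.pow 4).const_mul (ε ^ 2 / (64 * γ ^ 4 * lam ^ 2)))).congr_deriv ?_
  field_simp
  ring

lemma abs_deriv_phiF_le {ε γ lam : ℝ} (hγ : 0 < γ) (hlam : 0 < lam) (hε : 0 ≤ ε)
    (hε' : ε ≤ 8 * γ ^ 3 * lam) (t : ℝ) : |deriv (phiF ε γ lam) t| ≤ ε := by
  rw [(hasDerivAt_phiF hγ hlam ε t).deriv]
  have hquad : ε ^ 2 / (16 * γ ^ 3 * lam) ≤ ε / 2 := by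
    rw [div_le_iff₀ (by positivity)]; nlinarith
  have hcos : |cos (2 * γ * lam * t)| ≤ 1 := abs_cos_le_one _
  have hsc : |sin (γ * lam * t) ^ 3 * cos (γ * lam * t)| ≤ 1 := by
    rw [abs_mul, abs_pow]
    exact mul_le_one₀ (pow_le_one₀ (abs_nonneg _) (abs_sin_le_one _)) (abs_nonneg _)
      (abs_cos_le_one _)
  calc _ ≤ ε / 2 * |cos (2 * γ * lam * t)| +
        ε ^ 2 / (16 * γ ^ 3 * lam) * |sin (γ * lam * t) ^ 3 * cos (γ * lam * t)| := by
        refine (abs_add_le _ _).trans_eq ?_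
        rw [abs_mul, abs_mul, abs_of_nonneg (by positivity : 0 ≤ ε / 2),
          abs_of_nonneg (by positivity : 0 ≤ ε ^ 2 / (16 * γ ^ 3 * lam))]
    _ ≤ ε / 2 * 1 + ε / 2 * 1 := by gcongr
    _ = ε := by ring

lemma lipschitzWith_phiF {ε γ lam : ℝ} (hγ : 0 < γ) (hlam : 0 < lam) (hε : 0 ≤ ε)
    (hε' : ε ≤ 8 * γ ^ 3 * lam) : LipschitzWith ε.toNNReal (phiF ε γ lam) :=
  lipschitzWith_of_nnnorm_deriv_le (fun t => (hasDerivAt_phiF hγ hlam ε t).differentiableAt)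
    fun t => (Real.le_toNNReal_iff_coe_le hε).2 (abs_deriv_phiF_le hγ hlam hε hε' t)

lemma abs_phiF_le {ε γ lam : ℝ} (hγ : 0 < γ) (hlam : 0 < lam) (hε : 0 ≤ ε)
    (hε' : ε ≤ 8 * γ ^ 3 * lam) (t : ℝ) : |phiF ε γ lam t| ≤ ε / (2 * γ * lam) := by
  have hquad : ε ^ 2 / (64 * γ ^ 4 * lam ^ 2) ≤ ε / (4 * γ * lam) := by
    rw [div_le_div_iff₀ (by positivity) (by positivity)]
    have : 0 ≤ ε * (16 * γ ^ 3 * lam - ε) * (γ * lam) := by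
      have : 0 ≤ 16 * γ ^ 3 * lam - ε := by nlinarith [pow_pos hγ 3]
      positivity
    linarith
  have hsin2 : |sin (2 * γ * lam * t)| ≤ 1 := abs_sin_le_one _
  have hsin4 : |sin (γ * lam * t) ^ 4| ≤ 1 := by
    rw [abs_pow]; exact pow_le_one₀ (abs_nonneg _) (abs_sin_le_one _)
  calc |phiF ε γ lam t| ≤ ε / (4 * γ * lam) * |sin (2 * γ * lam * t)| +
        ε ^ 2 / (64 * γ ^ 4 * lam ^ 2) * |sin (γ * lam * t) ^ 4| := by
        refine (abs_add_le _ _).trans_eq ?_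
        rw [abs_mul, abs_mul, abs_of_nonneg (by positivity : 0 ≤ ε / (4 * γ * lam)),
          abs_of_nonneg (by positivity : 0 ≤ ε ^ 2 / (64 * γ ^ 4 * lam ^ 2))]
    _ ≤ ε / (4 * γ * lam) * 1 + ε / (4 * γ * lam) * 1 := by gcongr
    _ = ε / (2 * γ * lam) := by field_simp; ring

section Nodes

variable {a γ lam : ℝ}

@[simp]
lemma tNode_zero : tNode a γ lam 0 = a := by simp [tNode]

lemma tNode_mono (h : 0 < γ * lam) : Monotone (tNode a γ lam) := fun i j hij => by
  unfold tNode; gcongr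

lemma tNode_mem_Icc (h : 0 < γ * lam) {i k : ℕ} (hik : i ≤ k) :
    tNode a γ lam i ∈ Icc a (tNode a γ lam k) :=
  ⟨by simpa using tNode_mono h i.zero_le, tNode_mono h hik⟩

lemma tNode_eq_of_natCast_eq {b : ℝ} {k : ℕ} (h : γ * lam ≠ 0)
    (hk : (k : ℝ) = γ * lam * (b - a) / (2 * π)) : tNode a γ lam k = b := by
  rw [tNode, hk]
  set g := γ * lam
  field_simp
  ring

lemma exists_mem_Icc_tNode (h : 0 < γ * lam) {k : ℕ} {t : ℝ} (ht : t ∈ Ioc a (tNode a γ lam k)) :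
    ∃ i, 1 ≤ i ∧ i ≤ k ∧ t ∈ Icc (tNode a γ lam (i - 1)) (tNode a γ lam i) := by
  set d := 2 * π / (γ * lam)
  have hd : 0 < d := by positivity
  have htr : t = a + d * ((t - a) / d) := by field_simp; ring
  have hr : 0 < (t - a) / d := div_pos (sub_pos.2 ht.1) hd
  have hi : 1 ≤ ⌈(t - a) / d⌉₊ := Nat.ceil_pos.2 hr
  refine ⟨⌈(t - a) / d⌉₊, hi, Nat.ceil_le.2 ?_, ?_, ?_⟩
  · rw [div_le_iff₀ hd]; have := ht.2; unfold tNode at this; linarith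
  · rw [tNode, Nat.cast_sub hi, Nat.cast_one]
    nth_rw 2 [htr]
    gcongr
    linarith [Nat.ceil_lt_add_one hr.le]
  · rw [tNode]; nth_rw 1 [htr]
    gcongr
    exact Nat.le_ceil _

end Nodes

lemma LipschitzOnWith.union_of_le {E : Type*} [PseudoMetricSpace E] {f : ℝ → E} {K : ℝ≥0}
    {s t : Set ℝ} {b : ℝ} (hs : LipschitzOnWith K f s) (ht : LipschitzOnWith K f t)
    (hsb : ∀ x ∈ s, x ≤ b) (htb : ∀ y ∈ t, b ≤ y) (hbs : b ∈ s) (hbt : b ∈ t) :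
    LipschitzOnWith K f (s ∪ t) := by
  have across : ∀ x ∈ s, ∀ y ∈ t, dist (f x) (f y) ≤ K * dist x y := fun x hx y hy => calc
    dist (f x) (f y) ≤ dist (f x) (f b) + dist (f b) (f y) := dist_triangle _ _ _
    _ ≤ K * dist x b + K * dist b y :=
      add_le_add (hs.dist_le_mul x hx b hbs) (ht.dist_le_mul b hbt y hy)
    _ = K * dist x y := by
      have hxb := hsb x hx
      have hby := htb y hy
      rw [Real.dist_eq, Real.dist_eq, Real.dist_eq, abs_of_nonpos (by linarith),
        abs_of_nonpos (by linarith), abs_of_nonpos (by linarith)]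
      ring
  refine LipschitzOnWith.of_dist_le_mul fun x hx y hy => ?_
  rcases hx with hx | hx <;> rcases hy with hy | hy
  · exact hs.dist_le_mul x hx y hy
  · exact across x hx y hy
  · rw [dist_comm, dist_comm x]; exact across y hy x hx
  · exact ht.dist_le_mul x hx y hy

lemma LipschitzOnWith.Icc_union {E : Type*} [PseudoMetricSpace E] {f : ℝ → E} {K : ℝ≥0}
    {a b c : ℝ} (hab : a ≤ b) (hbc : b ≤ c) (h₁ : LipschitzOnWith K f (Icc a b))
    (h₂ : LipschitzOnWith K f (Icc b c)) : LipschitzOnWith K f (Icc a c) :=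
  Icc_union_Icc_eq_Icc hab hbc ▸
    h₁.union_of_le h₂ (fun _ hx => hx.2) (fun _ hy => hy.1) ⟨hab, le_rfl⟩ ⟨le_rfl, hbc⟩

lemma LocallyLipschitzOn.of_lipschitzOnWith_Iic_of_eqOn_Ici {f g : ℝ → ℝ} {s : Set ℝ} {b : ℝ}
    {K : ℝ≥0} (hs : IsOpen s) (hf : LipschitzOnWith K f (s ∩ Iic b))
    (hfg : EqOn f g (s ∩ Ici b)) (hg : LocallyLipschitzOn s g) : LocallyLipschitzOn s f := by
  intro x hx
  obtain ⟨K', u, hu, hgu⟩ := hg hx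
  have hgu' : LipschitzOnWith K' f (u ∩ (s ∩ Ici b)) := fun y hy z hz => by
    rw [hfg hy.2, hfg hz.2]; exact hgu hy.1 hz.1
  rcases lt_trichotomy x b with hxb | rfl | hbx
  · exact ⟨K, s ∩ Iio b, inter_mem_nhdsWithin s (Iio_mem_nhds hxb),
      hf.mono (inter_subset_inter_right s Iio_subset_Iic_self)⟩
  · rw [hs.nhdsWithin_eq hx] at hu
    obtain ⟨l, r, hxlr, hlr⟩ := mem_nhds_iff_exists_Ioo_subset.1 (inter_mem hu (hs.mem_nhds hx))
    refine ⟨max K K', Ioo l r, mem_nhdsWithin_of_mem_nhds (Ioo_mem_nhds hxlr.1 hxlr.2), ?_⟩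
    rw [← Ioc_union_Ico_eq_Ioo hxlr.1 hxlr.2]
    refine LipschitzOnWith.union_of_le ((hf.weaken (le_max_left K K')).mono ?_)
      ((hgu'.weaken (le_max_right K K')).mono ?_) (fun _ hy => hy.2) (fun _ hy => hy.1)
      ⟨hxlr.1, le_rfl⟩ ⟨le_rfl, hxlr.2⟩
    · exact fun y hy => ⟨(hlr ⟨hy.1, hy.2.trans_lt hxlr.2⟩).2, hy.2⟩
    · exact fun y hy => ⟨(hlr ⟨hxlr.1.trans_le hy.1, hy.2⟩).1, (hlr ⟨hxlr.1.trans_le hy.1, hy.2⟩).2,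
        hy.1⟩
  · exact ⟨K', u ∩ (s ∩ Ici b), inter_mem hu (inter_mem_nhdsWithin s (Ici_mem_nhds hbx)), hgu'⟩

def HasModulusOn (ω f : ℝ → ℝ) (s : Set ℝ) : Prop :=
  ∀ t ∈ s, ∀ u ∈ s, |f t - f u| ≤ ω |t - u|

lemma HasModulusOn.abs_sub_le_of_le {ω f : ℝ → ℝ} {s : Set ℝ} (hf : HasModulusOn ω f s)
    {t u : ℝ} (ht : t ∈ s) (hu : u ∈ s) (htu : t ≤ u) : |f t - f u| ≤ ω (u - t) := by
  simpa [abs_sub_comm t u, abs_of_nonneg (sub_nonneg.2 htu)] using hf t ht u hu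

lemma hasModulusOn_of_le {ω f : ℝ → ℝ} {s : Set ℝ}
    (h : ∀ t ∈ s, ∀ u ∈ s, t ≤ u → |f t - f u| ≤ ω (u - t)) : HasModulusOn ω f s := by
  intro t ht u hu
  rcases le_total t u with htu | hut
  · simpa [abs_sub_comm t u, abs_of_nonneg (sub_nonneg.2 htu)] using h t ht u hu htu
  · simpa [abs_sub_comm, abs_of_nonneg (sub_nonneg.2 hut)] using h u hu t ht hut

namespace IsModulusOfContinuity

variable {ω : ℝ → ℝ}

lemma nonneg (hω : IsModulusOfContinuity ω) (hω0 : 0 ≤ ω 0) {σ : ℝ} (hσ : 0 ≤ σ) : 0 ≤ ω σ :=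
  hσ.eq_or_lt.elim (fun h => h ▸ hω0) fun h => (hω.1 σ h).le

lemma mul_le (hω : IsModulusOfContinuity ω) {lam σ : ℝ} (hlam : 0 < lam) (hσ : 0 < σ)
    (hσlam : σ ≤ 1 / lam) : lam * ω (1 / lam) * σ ≤ ω σ := by
  have h := hω.2.2.2 σ (1 / lam) hσ hσlam
  rw [div_le_div_iff₀ (hω.1 σ hσ) (hω.1 _ (by positivity))] at h
  calc lam * ω (1 / lam) * σ = lam * (σ * ω (1 / lam)) := by ring
    _ ≤ lam * (1 / lam * ω σ) := by gcongr
    _ = ω σ := by field_simp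

lemma continuousOn (hω : IsModulusOfContinuity ω) {f : ℝ → ℝ} {s : Set ℝ}
    (hf : HasModulusOn ω f s) : ContinuousOn f s := by
  refine Metric.continuousOn_iff.2 fun x hx ε hε => ?_
  obtain ⟨δ, hδ, hsmall⟩ := Metric.tendsto_nhdsWithin_nhds.1 hω.2.1 ε hε
  refine ⟨δ, hδ, fun y hy hyx => ?_⟩
  rcases eq_or_ne y x with rfl | hne
  · simpa using hε
  have hpos : 0 < |y - x| := abs_pos.2 (sub_ne_zero.2 hne)
  have hω_small := hsmall hpos (by rwa [Real.dist_eq, sub_zero, abs_of_pos hpos, ← Real.dist_eq])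
  rw [Real.dist_eq, sub_zero, abs_of_pos (hω.1 _ hpos)] at hω_small
  exact (Real.dist_eq _ _).trans_le (hf y hy x hx) |>.trans_lt hω_small

lemma hasModulusOn_of_lipschitzOnWith (hω : IsModulusOfContinuity ω) (hω0 : 0 ≤ ω 0)
    {lam : ℝ} (hlam : 0 < lam) {f : ℝ → ℝ} {s : Set ℝ} {K : ℝ≥0} (hf : LipschitzOnWith K f s)
    (hK : (K : ℝ) ≤ lam * ω (1 / lam)) (hosc : ∀ t ∈ s, ∀ u ∈ s, |f t - f u| ≤ ω (1 / lam)) :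
    HasModulusOn ω f s := by
  intro t ht u hu
  rcases eq_or_ne t u with rfl | hne
  · simpa using hω0
  have hpos : 0 < |t - u| := abs_pos.2 (sub_ne_zero.2 hne)
  rcases le_or_gt |t - u| (1 / lam) with hle | hlt
  · calc |f t - f u| ≤ K * |t - u| := by simpa [Real.dist_eq] using hf.dist_le_mul t ht u hu
      _ ≤ lam * ω (1 / lam) * |t - u| := by gcongr
      _ ≤ ω |t - u| := hω.mul_le hlam hpos hle
  · exact (hosc t ht u hu).trans (hω.2.2.1 _ _ (by positivity) hlt.le)

lemma hasModulusOn_Icc_of_flat (hω : IsModulusOfContinuity ω) (hω0 : 0 ≤ ω 0) {f : ℝ → ℝ}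
    {b T1 T0 η : ℝ} (hη : η ∈ Icc 0 1) (hbT1 : b ≤ T1) (hωb : ω b ≤ η * ω (T1 - b))
    (hl : HasModulusOn ω f (Icc 0 b)) (hr : HasModulusOn (fun σ => (1 - η) * ω σ) f (Icc b T0))
    (hflat : ∀ u ∈ Icc b T1, f u = f b) : HasModulusOn ω f (Icc 0 T0) := by
  have hmono := hω.2.2.1
  refine hasModulusOn_of_le fun t ht u hu htu => ?_
  rcases le_or_gt u b with hub | hbu
  · exact hl.abs_sub_le_of_le ⟨ht.1, htu.trans hub⟩ ⟨hu.1, hub⟩ htu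
  rcases le_or_gt b t with hbt | htb
  · have := hr.abs_sub_le_of_le ⟨hbt, ht.2⟩ ⟨hbt.trans htu, hu.2⟩ htu
    nlinarith [hω.nonneg hω0 (sub_nonneg.2 htu), hη.1]
  have hleft := hl.abs_sub_le_of_le ⟨ht.1, htb.le⟩ ⟨ht.1.trans htb.le, le_rfl⟩ htb.le
  rcases le_or_gt u T1 with huT | hTu
  · rw [hflat u ⟨hbu.le, huT⟩]
    exact hleft.trans (hmono _ _ (by linarith) (by linarith))
  have hright := hr.abs_sub_le_of_le ⟨le_rfl, hbu.le.trans hu.2⟩ ⟨hbu.le, hu.2⟩ hbu.le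
  calc |f t - f u| ≤ |f t - f b| + |f b - f u| := abs_sub_le _ _ _
    _ ≤ η * ω (u - t) + (1 - η) * ω (u - t) := by
      gcongr
      · calc |f t - f b| ≤ ω b := hleft.trans (hmono _ _ (by linarith) (by linarith [ht.1]))
          _ ≤ η * ω (T1 - b) := hωb
          _ ≤ η * ω (u - t) := by gcongr; exacts [hη.1, hmono _ _ (sub_nonneg.2 hbT1) (by linarith)]
      · refine hright.trans ?_
        gcongr
        exacts [sub_nonneg.2 hη.2, hmono _ _ (by linarith) (by linarith)]
    _ = ω (u - t) := by ring

end IsModulusOfContinuity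

lemma nu2_nonneg (μ1 : ℝ) : 0 ≤ nu2 μ1 := by unfold nu2; positivity

lemma nu2_le_half (μ1 : ℝ) : nu2 μ1 ≤ 1 / 2 := by
  unfold nu2; linarith [min_le_left 1 (√μ1 / π)]

lemma nu2_le_of_lt_sq {μ1 γ : ℝ} (hγ : 0 < γ) (h : μ1 < γ ^ 2) : nu2 μ1 ≤ γ :=
  calc nu2 μ1 ≤ 1 / 2 * √μ1 := by
        unfold nu2
        gcongr
        exact (min_le_right _ _).trans (div_le_self (sqrt_nonneg _) (by linarith [pi_gt_three]))
    _ ≤ √(γ ^ 2) := by linarith [sqrt_nonneg μ1, sqrt_le_sqrt h.le]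
    _ = γ := sqrt_sq hγ.le

section Amplitudes

variable {θ : ℝ → ℝ} {T0 a γ lam ν : ℝ} {k : ℕ}

lemma tNode_mem_Ioo (hγlam : 0 < γ * lam) (ha : 0 < a) (hk : tNode a γ lam k < T0) {i : ℕ}
    (hi : i ≤ k) : tNode a γ lam i ∈ Ioo 0 T0 :=
  ⟨ha.trans_le (tNode_mem_Icc hγlam hi).1, (tNode_mem_Icc hγlam hi).2.trans_lt hk⟩

lemma mul_theta_tNode_mem_Icc (hθpos : ∀ t ∈ Ioo 0 T0, 0 < θ t)
    (hθmono : AntitoneOn θ (Ioo 0 T0)) (hγlam : 0 < γ * lam) (ha : 0 < a)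
    (hk : tNode a γ lam k < T0) (hν : 0 ≤ ν) {B : ℝ} (hθa : θ a ≤ B) {i : ℕ} (hi : i ≤ k) :
    ν * θ (tNode a γ lam i) ∈ Icc 0 (ν * B) := by
  have hnode := tNode_mem_Ioo hγlam ha hk hi
  have haT0 : a ∈ Ioo 0 T0 := by simpa using tNode_mem_Ioo hγlam ha hk k.zero_le
  exact ⟨mul_nonneg hν (hθpos _ hnode).le, mul_le_mul_of_nonneg_left
    ((hθmono haT0 hnode (tNode_mem_Icc hγlam hi).1).trans hθa) hν⟩

lemma mul_theta_tNode_le (hθpos : ∀ t ∈ Ioo 0 T0, 0 < θ t) (hθmono : AntitoneOn θ (Ioo 0 T0))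
    (hγlam : 0 < γ * lam) (ha : 0 < a) (hk : tNode a γ lam k < T0) (hν : ν ≤ 1) {i : ℕ}
    (hi : i ≤ k) {t : ℝ} (ht : t ∈ Ioo (tNode a γ lam (i - 1)) (tNode a γ lam i)) :
    ν * θ (tNode a γ lam i) ≤ θ t := by
  have hnode := tNode_mem_Ioo hγlam ha hk hi
  have ht' : t ∈ Ioo 0 T0 :=
    ⟨(tNode_mem_Ioo hγlam ha hk ((i.sub_le 1).trans hi)).1.trans ht.1, ht.2.trans hnode.2⟩
  exact (mul_le_of_le_one_left (hθpos _ hnode).le hν).trans (hθmono ht' hnode ht.2.le)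

end Amplitudes

def IsPhiOnCells (γ lam a : ℝ) (k : ℕ) (ε : ℕ → ℝ) (f : ℝ → ℝ) : Prop :=
  ∀ i : ℕ, 1 ≤ i → i ≤ k →
    ∀ t ∈ Icc (tNode a γ lam (i - 1)) (tNode a γ lam i), f t = γ ^ 2 - phiF (ε i) γ lam t

namespace IsPhiOnCells

variable {γ lam a p K : ℝ} {k : ℕ} {ε : ℕ → ℝ} {f : ℝ → ℝ}

lemma lipschitzOnWith_cell (hf : IsPhiOnCells γ lam a k ε f) (hγ : 0 < γ) (hlam : 0 < lam)
    {i : ℕ} (hi : 1 ≤ i) (hik : i ≤ k) (hε : ε i ∈ Icc 0 K) (hK : K ≤ 8 * γ ^ 3 * lam) :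
    LipschitzOnWith K.toNNReal f (Icc (tNode a γ lam (i - 1)) (tNode a γ lam i)) :=
  LipschitzOnWith.of_dist_le' fun x hx y hy => by
    rw [hf i hi hik x hx, hf i hi hik y hy, dist_sub_left]
    refine ((lipschitzWith_phiF hγ hlam hε.1 (hε.2.trans hK)).dist_le_mul x y).trans ?_
    rw [Real.coe_toNNReal _ hε.1]
    gcongr
    exact hε.2

lemma lipschitzOnWith (hf : IsPhiOnCells γ lam a k ε f) (hγ : 0 < γ) (hlam : 0 < lam)
    (hpa : p ≤ a) (hflat : ∀ t ∈ Icc p a, f t = γ ^ 2) (hε : ∀ i ≤ k, ε i ∈ Icc 0 K)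
    (hK : K ≤ 8 * γ ^ 3 * lam) : LipschitzOnWith K.toNNReal f (Icc p (tNode a γ lam k)) := by
  induction k with
  | zero =>
    rw [tNode_zero]
    exact LipschitzOnWith.of_dist_le_mul fun x hx y hy => by
      rw [hflat x hx, hflat y hy, dist_self]; positivity
  | succ k ih =>
    have hnode := tNode_mem_Icc (a := a) (mul_pos hγ hlam) k.le_succ
    refine (ih (fun i hi hik => hf i hi (hik.trans k.le_succ)) fun i hi => hε i (hi.trans
      k.le_succ)).Icc_union (hpa.trans hnode.1) hnode.2 ?_
    simpa using hf.lipschitzOnWith_cell hγ hlam k.succ_pos le_rfl (hε _ le_rfl) hK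

lemma abs_sub_sq_le (hf : IsPhiOnCells γ lam a k ε f) (hγ : 0 < γ) (hlam : 0 < lam)
    (hflat : ∀ t ∈ Icc p a, f t = γ ^ 2) (hε : ∀ i ≤ k, ε i ∈ Icc 0 K)
    (hK : K ≤ 8 * γ ^ 3 * lam) {t : ℝ} (ht : t ∈ Icc p (tNode a γ lam k)) :
    |f t - γ ^ 2| ≤ K / (2 * γ * lam) := by
  rcases le_or_gt t a with hta | hat
  · rw [hflat t ⟨ht.1, hta⟩, sub_self, abs_zero]
    have := (hε 0 k.zero_le).1.trans (hε 0 k.zero_le).2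
    positivity
  obtain ⟨i, hi, hik, hti⟩ := exists_mem_Icc_tNode (mul_pos hγ hlam) ⟨hat, ht.2⟩
  rw [hf i hi hik t hti, sub_sub_cancel_left, abs_neg]
  refine (abs_phiF_le hγ hlam (hε i hik).1 ((hε i hik).2.trans hK) t).trans ?_
  gcongr
  exact (hε i hik).2

lemma abs_deriv_le (hf : IsPhiOnCells γ lam a k ε f) (hγ : 0 < γ) (hlam : 0 < lam)
    {i : ℕ} (hi : 1 ≤ i) (hik : i ≤ k) (hε0 : 0 ≤ ε i) (hε8 : ε i ≤ 8 * γ ^ 3 * lam) {t : ℝ}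
    (ht : t ∈ Ioo (tNode a γ lam (i - 1)) (tNode a γ lam i)) : |deriv f t| ≤ ε i := by
  have hloc : f =ᶠ[𝓝 t] fun x => γ ^ 2 - phiF (ε i) γ lam x :=
    eventually_of_mem (Ioo_mem_nhds ht.1 ht.2) fun x hx => hf i hi hik x (Ioo_subset_Icc_self hx)
  rw [hloc.deriv_eq, deriv_const_sub, abs_neg]
  exact abs_deriv_phiF_le hγ hlam hε0 hε8 t

lemma ae_abs_deriv_le (hf : IsPhiOnCells γ lam a k ε f) (hγ : 0 < γ) (hlam : 0 < lam)
    (hε : ∀ i ≤ k, ε i ∈ Icc 0 K) (hK : K ≤ 8 * γ ^ 3 * lam)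
    {s : Set ℝ} {c θ : ℝ → ℝ} (hs : IsOpen s)
    (hεθ : ∀ i, 1 ≤ i → i ≤ k → ∀ t ∈ Ioo (tNode a γ lam (i - 1)) (tNode a γ lam i), ε i ≤ θ t)
    (hfc : EqOn f c (s \ Icc a (tNode a γ lam k)))
    (hc : ∀ᵐ t ∂volume.restrict s, |deriv c t| ≤ θ t) :
    ∀ᵐ t ∂volume.restrict s, |deriv f t| ≤ θ t := by
  filter_upwards [hc, ae_restrict_mem hs.measurableSet,
    ae_restrict_of_ae ((countable_range (tNode a γ lam)).ae_notMem volume)] with t hct hts hnode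
  by_cases hmem : t ∈ Icc a (tNode a γ lam k)
  · have hta : a < t := hmem.1.lt_of_ne fun h => hnode ⟨0, by simpa using h⟩
    obtain ⟨i, hi, hik, hti⟩ := exists_mem_Icc_tNode (mul_pos hγ hlam) ⟨hta, hmem.2⟩
    have hti' : t ∈ Ioo (tNode a γ lam (i - 1)) (tNode a γ lam i) :=
      ⟨hti.1.lt_of_ne fun h => hnode ⟨_, h⟩, hti.2.lt_of_ne fun h => hnode ⟨_, h.symm⟩⟩
    exact (hf.abs_deriv_le hγ hlam hi hik (hε i hik).1 ((hε i hik).2.trans hK) hti').trans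
      (hεθ i hi hik t hti')
  · have hloc : f =ᶠ[𝓝 t] c :=
      eventually_of_mem ((hs.inter isClosed_Icc.isOpen_compl).mem_nhds ⟨hts, hmem⟩)
        fun x hx => hfc hx
    rwa [hloc.deriv_eq]

lemma hasModulusOn {ω : ℝ → ℝ} (hω : IsModulusOfContinuity ω) (hω0 : 0 ≤ ω 0)
    (hf : IsPhiOnCells γ lam a k ε f) (hγ : 0 < γ) (hlam : 0 < lam) (hpa : p ≤ a)
    (hflat : ∀ t ∈ Icc p a, f t = γ ^ 2) {ν : ℝ} (hν1 : ν ≤ 1) (hνγ : ν ≤ γ)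
    (hν8 : ν * ω (1 / lam) ≤ 8 * γ ^ 3) (hε : ∀ i ≤ k, ε i ∈ Icc 0 (ν * (lam * ω (1 / lam)))) :
    HasModulusOn ω f (Icc p (tNode a γ lam k)) := by
  have hW : 0 < ω (1 / lam) := hω.1 _ (by positivity)
  have hK : ν * (lam * ω (1 / lam)) ≤ 8 * γ ^ 3 * lam := by nlinarith
  have hKW : ν * (lam * ω (1 / lam)) ≤ lam * ω (1 / lam) :=
    mul_le_of_le_one_left (by positivity) hν1
  refine hω.hasModulusOn_of_lipschitzOnWith hω0 hlam
    (hf.lipschitzOnWith hγ hlam hpa hflat hε hK) ?_ fun t ht u hu => ?_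
  · exact (Real.coe_toNNReal' _).trans_le (max_le hKW (by positivity))
  have hsup := fun t ht => hf.abs_sub_sq_le hγ hlam hflat hε hK (t := t) ht
  calc |f t - f u| ≤ |f t - γ ^ 2| + |γ ^ 2 - f u| := abs_sub_le _ _ _
    _ ≤ 2 * (ν * (lam * ω (1 / lam)) / (2 * γ * lam)) := by
      rw [abs_sub_comm (γ ^ 2)]; linarith [hsup t ht, hsup u hu]
    _ = ν / γ * ω (1 / lam) := by field_simp
    _ ≤ 1 * ω (1 / lam) := by gcongr; exact (div_le_one hγ).2 hνγ
    _ = ω (1 / lam) := one_mul _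

end IsPhiOnCells

theorem theta_construction_membership_general
    (T0 μ1 μ2 T1 γ η : ℝ) (ω θ : ℝ → ℝ)
    (hω : IsModulusOfContinuity ω)
    (hθpos : ∀ t ∈ Ioo 0 T0, 0 < θ t)
    (hθmono : AntitoneOn θ (Ioo 0 T0))
    (hT1 : T1 ∈ Ioo 0 T0) (hγ : 0 < γ) (hγ2 : γ ^ 2 ∈ Ioo μ1 μ2) (hη : η ∈ Ioo 0 1)
    (cstar : ℝ → ℝ) (hcstar : MemD T0 μ1 μ2 ω θ T1 γ η cstar)
    (lam : ℝ) (hlam : 0 < lam)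
    (hlam1 : nu2 μ1 * ω (1 / lam) ≤ 8 * γ ^ 3)
    (hlam2 : nu2 μ1 / (2 * γ) * ω (1 / lam) ≤ min (γ ^ 2 - μ1) (μ2 - γ ^ 2))
    (a b : ℝ) (ha : 0 < a) (hab : a < b) (hb : b < T1)
    (k : ℕ) (hk : (k : ℝ) = γ * lam * (b - a) / (2 * Real.pi))
    (hωb : ω b ≤ η * ω (T1 - b))
    (hθa : θ a ≤ lam * ω (1 / lam))
    (cl : ℝ → ℝ)
    (hclOut : ∀ t ∈ Icc 0 a ∪ Icc b T0, cl t = cstar t)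
    (hclIn : ∀ i : ℕ, 1 ≤ i → i ≤ k →
      ∀ t ∈ Icc (tNode a γ lam (i - 1)) (tNode a γ lam i),
        cl t = γ ^ 2 - phiF (nu2 μ1 * θ (tNode a γ lam i)) γ lam t) :
    MemPS T0 μ1 μ2 ω θ cl ∧
    ∀ t ∈ Icc 0 T0, |cl t - cstar t| ≤ nu2 μ1 / (2 * γ) * ω (1 / lam) := by
  obtain ⟨⟨-, hc_lip, hc_bnd, hc_mod, hc_ae⟩, hc_flat, hc_mod'⟩ := hcstar
  set ν := nu2 μ1
  set W := ω (1 / lam)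
  have hγlam : 0 < γ * lam := mul_pos hγ hlam
  have hb0 : 0 ≤ b := (ha.trans hab).le
  have hbT0 : b < T0 := hb.trans hT1.2
  have hbk : tNode a γ lam k = b := tNode_eq_of_natCast_eq hγlam.ne' hk
  have hν1 : ν ≤ 1 := (nu2_le_half μ1).trans (by norm_num)
  have hε : ∀ i ≤ k, ν * θ (tNode a γ lam i) ∈ Icc 0 (ν * (lam * W)) := fun i hi =>
    mul_theta_tNode_mem_Icc hθpos hθmono hγlam ha (hbk ▸ hbT0) (nu2_nonneg μ1) hθa hi
  have hK : ν * (lam * W) ≤ 8 * γ ^ 3 * lam := by nlinarith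
  have hcells : IsPhiOnCells γ lam a k (fun i => ν * θ (tNode a γ lam i)) cl := hclIn
  have hflat : ∀ t ∈ Icc 0 a, cl t = γ ^ 2 := fun t ht => by
    rw [hclOut t (Or.inl ht), hc_flat t ⟨ht.1, ht.2.trans (hab.trans hb).le⟩]
  have hout : ∀ t ∈ Icc b T0, cl t = cstar t := fun t ht => hclOut t (Or.inr ht)
  have hsup : ∀ t ∈ Icc 0 b, |cl t - γ ^ 2| ≤ ν / (2 * γ) * W := fun t ht => by
    have hM : ν * (lam * W) / (2 * γ * lam) = ν / (2 * γ) * W := by field_simp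
    rw [← hM]; exact hcells.abs_sub_sq_le hγ hlam hflat hε hK (hbk ▸ ht)
  have hω0 : 0 ≤ ω 0 := by simpa using hc_mod b ⟨hb0, hbT0.le⟩ b ⟨hb0, hbT0.le⟩
  have hmod : HasModulusOn ω cl (Icc 0 T0) := by
    refine hω.hasModulusOn_Icc_of_flat hω0 (Ioo_subset_Icc_self hη) hb.le hωb
      (hbk ▸ hcells.hasModulusOn hω hω0 hγ hlam ha.le hflat hν1 (nu2_le_of_lt_sq hγ hγ2.1) hlam1
        hε) (fun t ht u hu => ?_) fun u hu => ?_
    · rw [hout t ht, hout u hu]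
      exact hc_mod' t ⟨hb0.trans ht.1, ht.2⟩ u ⟨hb0.trans hu.1, hu.2⟩
    · rw [hout u ⟨hu.1, hu.2.trans hT1.2.le⟩, hout b ⟨le_rfl, hbT0.le⟩,
        hc_flat u ⟨hb0.trans hu.1, hu.2⟩, hc_flat b ⟨hb0, hb.le⟩]
  refine ⟨⟨hω.continuousOn hmod, ?_, fun t ht => ?_, hmod, ?_⟩, fun t ht => ?_⟩
  · exact LocallyLipschitzOn.of_lipschitzOnWith_Iic_of_eqOn_Ici isOpen_Ioo
      ((hbk ▸ hcells.lipschitzOnWith hγ hlam ha.le hflat hε hK).mono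
        fun t ht => ⟨ht.1.1.le, ht.2⟩) (fun t ht => hout t ⟨ht.2, ht.1.2.le⟩) hc_lip
  · rcases le_or_gt t b with htb | hbt
    · have := abs_le.1 ((hsup t ⟨ht.1.le, htb⟩).trans hlam2)
      constructor <;> linarith [min_le_left (γ ^ 2 - μ1) (μ2 - γ ^ 2),
        min_le_right (γ ^ 2 - μ1) (μ2 - γ ^ 2)]
    · rw [hout t ⟨hbt.le, ht.2.le⟩]; exact hc_bnd t ht
  · refine hcells.ae_abs_deriv_le hγ hlam hε hK isOpen_Ioo
      (fun i _ hik t ht => mul_theta_tNode_le hθpos hθmono hγlam ha (hbk ▸ hbT0) hν1 hik ht)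
      (fun t ht => ?_) hc_ae
    rw [hbk] at ht
    refine hclOut t ((le_or_gt t a).imp (fun hta => ⟨ht.1.1.le, hta⟩) fun hat => ⟨?_, ht.1.2.le⟩)
    exact not_lt.1 fun htb => ht.2 ⟨hat.le, htb.le⟩
  · rcases le_or_gt t b with htb | hbt
    · rw [hc_flat t ⟨ht.1, htb.trans hb.le⟩]; exact hsup t ⟨ht.1, htb⟩
    · rw [hout t ⟨hbt.le, ht.2⟩, sub_self, abs_zero]
      exact mul_nonneg (div_nonneg (nu2_nonneg μ1) (by positivity)) (hω.1 _ (by positivity)).le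

/-- `θ`-construction, Proposition `prop:theta`, statement (1). -/
theorem theta_construction_membership
    (T0 μ1 μ2 T1 γ η : ℝ) (ω θ : ℝ → ℝ)
    (hT0 : 0 < T0) (hμ1 : 0 < μ1) (hμ12 : μ1 < μ2)
    (hω : IsModulusOfContinuity ω)
    (hθcont : ContinuousOn θ (Ioo 0 T0))
    (hθpos : ∀ t ∈ Ioo 0 T0, 0 < θ t)
    (hθmono : AntitoneOn θ (Ioo 0 T0))
    (hT1 : T1 ∈ Ioo 0 T0) (hγ : 0 < γ) (hγ2 : γ ^ 2 ∈ Ioo μ1 μ2) (hη : η ∈ Ioo 0 1)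
    (cstar : ℝ → ℝ) (hcstar : MemD T0 μ1 μ2 ω θ T1 γ η cstar)
    (lam : ℝ) (hlam : 0 < lam)
    (hlam1 : nu2 μ1 * ω (1 / lam) ≤ 8 * γ ^ 3)
    (hlam2 : nu2 μ1 / (2 * γ) * ω (1 / lam) ≤ min (γ ^ 2 - μ1) (μ2 - γ ^ 2))
    (a b : ℝ) (ha : 0 < a) (hab : a < b) (hb : b < T1)
    (k : ℕ) (hk : (k : ℝ) = γ * lam * (b - a) / (2 * Real.pi))
    (haN : ∃ n : ℕ, a * γ * lam / (2 * Real.pi) = n)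
    (hbN : ∃ n : ℕ, b * γ * lam / (2 * Real.pi) = n)
    (hωb : ω b ≤ η * ω (T1 - b))
    (hθa : θ a ≤ lam * ω (1 / lam))
    (cl : ℝ → ℝ)
    (hclOut : ∀ t ∈ Icc 0 a ∪ Icc b T0, cl t = cstar t)
    (hclIn : ∀ i : ℕ, 1 ≤ i → i ≤ k →
      ∀ t ∈ Icc (tNode a γ lam (i - 1)) (tNode a γ lam i),
        cl t = γ ^ 2 - phiF (nu2 μ1 * θ (tNode a γ lam i)) γ lam t) :
    MemPS T0 μ1 μ2 ω θ cl ∧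
    ∀ t ∈ Icc 0 T0, |cl t - cstar t| ≤ nu2 μ1 / (2 * γ) * ω (1 / lam) :=
  theta_construction_membership_general T0 μ1 μ2 T1 γ η ω θ hω hθpos hθmono hT1 hγ hγ2 hη cstar
    hcstar lam hlam hlam1 hlam2 a b ha hab hb k hk hωb hθa cl hclOut hclIn
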